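/- Let Z be a proper metric space. Then the flow space FS(Z) of generalized geodesics with metric d_FS is a proper metric space, and for every t ∈ ℝ the evaluation map FS(Z) → Z, c ↦ c(t), is uniformly continuous and proper. -/

import Mathlib

open MeasureTheory

/-- A generalized geodesic in a metric space. -/
def IsGenGeodesic {Z : Type*} [MetricSpace Z] (c : ℝ → Z) : Prop :=
  Continuous c ∧
  ∃ I : Set ℝ,
    ((∃ a b : ℝ, a ≤ b ∧ I = Set.Icc a b) ∨ (∃ a : ℝ, I = Set.Ici a) ∨
      (∃ b : ℝ, I = Set.Iic b) ∨ I = Set.univ) ∧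
    (∀ s ∈ I, ∀ t ∈ I, dist (c s) (c t) = |s - t|) ∧
    (∀ t ∉ I, ∃ ε > 0, ∀ s : ℝ, |s - t| < ε → c s = c t)

/-- The distance on the space of generalized geodesics. -/
noncomputable def dFS {Z : Type*} [MetricSpace Z] (c c' : ℝ → Z) : ℝ :=
  ∫ t : ℝ, dist (c t) (c' t) / (2 * Real.exp |t|)

/-!
Generalized geodesics are 1-Lipschitz, so a sequence of them whose values at `0` stay bounded
has, by properness of `Z` and a diagonal argument over `ℚ`, a pointwise convergent subsequence.
Recording the isometry interval of each geodesic by its endpoints in the compact space `EReal`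
and passing to a further subsequence along which the endpoints converge shows that the pointwise
limit is again a generalized geodesic. The 1-Lipschitz bound
`dist (c t) (c' t) ≤ dist (c 0) (c' 0) + 2|t|` gives an integrable majorant, so by dominated
convergence pointwise convergence implies `dFS`-convergence. Conversely, if `dist (c t) (c' t) ≥ ε`
then `dist (c s) (c' s) ≥ ε / 2` for `|s - t| ≤ min (ε / 4) 1`, which bounds `dFS c c'` from below;
this gives uniform continuity of evaluation and bounds `dist (c 0) (c₀ 0)` on `dFS`-balls.
-/

open Filter Set Topology

section Constancy

variable {X Y : Type*} [TopologicalSpace X]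

theorem Set.EqOn.closure_prod_self [TopologicalSpace Y] [T2Space Y] {f g : X × X → Y} {s : Set X}
    (h : EqOn f g (s ×ˢ s)) (hf : Continuous f) (hg : Continuous g) :
    EqOn f g (closure s ×ˢ closure s) := by
  simpa only [closure_prod_eq] using h.closure hf hg

theorem IsPreconnected.apply_eq_of_eventually_eq {c : X → Y} {s : Set X} (hs : IsPreconnected s)
    (h : ∀ x ∈ s, ∀ᶠ y in 𝓝 x, c y = c x) {x y : X} (hx : x ∈ s) (hy : y ∈ s) : c x = c y :=
  hs.induction₂ (fun x y => c x = c y)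
    (fun x hx => ((h x hx).filter_mono nhdsWithin_le_nhds).mono fun _ hy => hy.symm)
    (fun _ _ _ _ _ _ => Eq.trans) (fun _ _ _ _ => Eq.symm) hx hy

theorem apply_eq_of_eventually_eq_on_Ioo [TopologicalSpace Y] [T2Space Y] {c : ℝ → Y}
    (hc : Continuous c) {x y : ℝ} (hxy : x ≤ y) (h : ∀ z ∈ Ioo x y, ∀ᶠ w in 𝓝 z, c w = c z) : c x = c y := by
  rcases hxy.eq_or_lt with rfl | hlt
  · rfl
  have hconst : EqOn (fun p : ℝ × ℝ => c p.1) (fun p => c p.2) (Ioo x y ×ˢ Ioo x y) :=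
    fun p hp => isPreconnected_Ioo.apply_eq_of_eventually_eq h hp.1 hp.2
  have := hconst.closure_prod_self (by fun_prop) (by fun_prop)
  rw [closure_Ioo hlt.ne] at this
  exact this (mk_mem_prod (left_mem_Icc.2 hlt.le) (right_mem_Icc.2 hlt.le))

end Constancy

theorem Real.eventually_nhds_iff_abs_sub_lt {p : ℝ → Prop} {t : ℝ} :
    (∀ᶠ s in 𝓝 t, p s) ↔ ∃ ε > 0, ∀ s, |s - t| < ε → p s := by
  simp only [Metric.eventually_nhds_iff, Real.dist_eq]

section FlowSpace

variable {Z : Type*} [MetricSpace Z]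

theorem lipschitzWith_one_of_isometricOn_of_eventually_const {c : ℝ → Z} (hc : Continuous c)
    {I : Set ℝ} (hI : IsClosed I) (hiso : ∀ s ∈ I, ∀ t ∈ I, dist (c s) (c t) = |s - t|)
    (hloc : ∀ t ∉ I, ∀ᶠ s in 𝓝 t, c s = c t) : LipschitzWith 1 c := by
  suffices key : ∀ s t, s ≤ t → dist (c s) (c t) ≤ t - s by
    refine LipschitzWith.of_dist_le_mul fun s t => ?_
    rw [NNReal.coe_one, one_mul, Real.dist_eq]
    rcases le_total s t with hst | hts
    · exact (key s t hst).trans (abs_sub_comm s t ▸ le_abs_self _)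
    · rw [dist_comm]; exact (key t s hts).trans (le_abs_self _)
  intro s t hst
  set J := I ∩ Icc s t
  have hbdd : BddBelow J ∧ BddAbove J := ⟨bddBelow_Icc.mono inter_subset_right,
    bddAbove_Icc.mono inter_subset_right⟩
  by_cases hJ : J.Nonempty
  · have hJc : IsClosed J := hI.inter isClosed_Icc
    have hinf : sInf J ∈ J := hJc.csInf_mem hJ hbdd.1
    have hsup : sSup J ∈ J := hJc.csSup_mem hJ hbdd.2
    have hleft : c s = c (sInf J) := apply_eq_of_eventually_eq_on_Ioo hc hinf.2.1 fun z hz =>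
      hloc z fun hzI => (csInf_le hbdd.1 ⟨hzI, hz.1.le, hz.2.le.trans hinf.2.2⟩).not_gt hz.2
    have hright : c (sSup J) = c t := apply_eq_of_eventually_eq_on_Ioo hc hsup.2.2 fun z hz =>
      hloc z fun hzI => (le_csSup hbdd.2 ⟨hzI, hsup.2.1.trans hz.1.le, hz.2.le⟩).not_gt hz.1
    have hmid : sInf J ≤ sSup J := csInf_le_csSup hJ hbdd.1 hbdd.2
    rw [hleft, ← hright, hiso _ hinf.1 _ hsup.1, abs_sub_comm, abs_of_nonneg (sub_nonneg.2 hmid)]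
    linarith [hinf.2.1, hsup.2.2]
  · have hst' : c s = c t := apply_eq_of_eventually_eq_on_Ioo hc hst fun z hz =>
      hloc z fun hzI => hJ ⟨z, hzI, hz.1.le, hz.2.le⟩
    rw [hst', dist_self]
    linarith

theorem eq_Icc_or_Ici_or_Iic_or_univ_iff {I : Set ℝ} :
    ((∃ a b : ℝ, a ≤ b ∧ I = Icc a b) ∨ (∃ a : ℝ, I = Ici a) ∨ (∃ b : ℝ, I = Iic b) ∨
      I = univ) ↔ ∃ a b : EReal, a ≤ b ∧ a ≠ ⊤ ∧ b ≠ ⊥ ∧ I = (↑) ⁻¹' Icc a b := by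
  constructor
  · rintro (⟨a, b, hab, rfl⟩ | ⟨a, rfl⟩ | ⟨b, rfl⟩ | rfl)
    · exact ⟨a, b, EReal.coe_le_coe_iff.2 hab, EReal.coe_ne_top a, EReal.coe_ne_bot b, by ext; simp⟩
    · exact ⟨a, ⊤, le_top, EReal.coe_ne_top a, bot_lt_top.ne', by ext; simp⟩
    · exact ⟨⊥, b, bot_le, bot_lt_top.ne, EReal.coe_ne_bot b, by ext; simp⟩
    · exact ⟨⊥, ⊤, bot_le, bot_lt_top.ne, bot_lt_top.ne', by ext; simp⟩
  · rintro ⟨a, b, hab, ha, hb, rfl⟩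
    induction a using EReal.rec <;> induction b using EReal.rec <;> simp_all
    exact Or.inl ⟨_, _, hab, rfl⟩

theorem isGenGeodesic_iff {c : ℝ → Z} :
    IsGenGeodesic c ↔ Continuous c ∧ ∃ a b : EReal, a ≤ b ∧ a ≠ ⊤ ∧ b ≠ ⊥ ∧
      (∀ s ∈ ((↑) : ℝ → EReal) ⁻¹' Icc a b, ∀ t ∈ ((↑) : ℝ → EReal) ⁻¹' Icc a b,
        dist (c s) (c t) = |s - t|) ∧
      ∀ t ∉ ((↑) : ℝ → EReal) ⁻¹' Icc a b, ∀ᶠ s in 𝓝 t, c s = c t := by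
  simp only [IsGenGeodesic, eq_Icc_or_Ici_or_Iic_or_univ_iff, ← Real.eventually_nhds_iff_abs_sub_lt]
  constructor
  · rintro ⟨hc, _, ⟨a, b, hab, ha, hb, rfl⟩, hiso, hloc⟩
    exact ⟨hc, a, b, hab, ha, hb, hiso, hloc⟩
  · rintro ⟨hc, a, b, hab, ha, hb, hiso, hloc⟩
    exact ⟨hc, _, ⟨a, b, hab, ha, hb, rfl⟩, hiso, hloc⟩

theorem IsGenGeodesic.lipschitzWith {c : ℝ → Z} (h : IsGenGeodesic c) : LipschitzWith 1 c := by
  obtain ⟨hc, a, b, -, -, -, hiso, hloc⟩ := isGenGeodesic_iff.1 h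
  exact lipschitzWith_one_of_isometricOn_of_eventually_const hc
    (isClosed_Icc.preimage continuous_coe_real_ereal) hiso hloc

theorem isGenGeodesic_const (z : Z) : IsGenGeodesic fun _ : ℝ => z :=
  ⟨continuous_const, Icc 0 0, Or.inl ⟨0, 0, le_rfl, rfl⟩,
    fun s hs t ht => by simp_all, fun _ _ => ⟨1, one_pos, fun _ _ => rfl⟩⟩

/-- Open intervals make this description stable under pointwise limits whose endpoints converge
in `EReal`. -/
def IsGenGeodesicWithEnds (c : ℝ → Z) (a b : EReal) : Prop :=
  (∀ s ∈ ((↑) : ℝ → EReal) ⁻¹' Ioo a b, ∀ t ∈ ((↑) : ℝ → EReal) ⁻¹' Ioo a b,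
    dist (c s) (c t) = |s - t|) ∧
  (∀ s ∈ ((↑) : ℝ → EReal) ⁻¹' Iio a, ∀ t ∈ ((↑) : ℝ → EReal) ⁻¹' Iio a, c s = c t) ∧
  (∀ s ∈ ((↑) : ℝ → EReal) ⁻¹' Ioi b, ∀ t ∈ ((↑) : ℝ → EReal) ⁻¹' Ioi b, c s = c t)

theorem IsGenGeodesic.exists_withEnds {c : ℝ → Z} (h : IsGenGeodesic c) :
    ∃ a b : EReal, a ≤ b ∧ IsGenGeodesicWithEnds c a b := by
  obtain ⟨-, a, b, hab, -, -, hiso, hloc⟩ := isGenGeodesic_iff.1 h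
  have hconst : ∀ S : Set EReal, S.OrdConnected → Disjoint S (Icc a b) →
      ∀ s ∈ ((↑) : ℝ → EReal) ⁻¹' S, ∀ t ∈ ((↑) : ℝ → EReal) ⁻¹' S, c s = c t :=
    fun S hS hdisj _ hs _ ht => (hS.preimage_mono EReal.coe_strictMono.monotone).isPreconnected
      |>.apply_eq_of_eventually_eq (fun x hx => hloc x (hdisj.notMem_of_mem_left hx)) hs ht
  refine ⟨a, b, hab, fun s hs t ht => hiso s (Ioo_subset_Icc_self hs) t (Ioo_subset_Icc_self ht),
    hconst _ ordConnected_Iio ?_, hconst _ ordConnected_Ioi ?_⟩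
  · exact disjoint_left.2 fun x hx hx' => hx'.1.not_gt hx
  · exact disjoint_left.2 fun x hx hx' => hx'.2.not_gt hx

theorem preimage_Icc_subset_closure_preimage_Ioo {a b : EReal} (hab : a < b) :
    ((↑) : ℝ → EReal) ⁻¹' Icc a b ⊆ closure ((↑) ⁻¹' Ioo a b) := by
  obtain ⟨m, ham, hmb⟩ := EReal.lt_iff_exists_real_btwn.1 hab
  intro t ht
  rcases lt_trichotomy t m with htm | rfl | hmt
  · have hsub : Ioo t m ⊆ (↑) ⁻¹' Ioo a b := fun x hx =>
      ⟨ht.1.trans_lt (EReal.coe_lt_coe_iff.2 hx.1), (EReal.coe_lt_coe_iff.2 hx.2).trans hmb⟩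
    exact closure_mono hsub (closure_Ioo htm.ne ▸ left_mem_Icc.2 htm.le)
  · exact subset_closure ⟨ham, hmb⟩
  · have hsub : Ioo m t ⊆ (↑) ⁻¹' Ioo a b := fun x hx =>
      ⟨ham.trans (EReal.coe_lt_coe_iff.2 hx.1), (EReal.coe_lt_coe_iff.2 hx.2).trans_le ht.2⟩
    exact closure_mono hsub (closure_Ioo hmt.ne ▸ right_mem_Icc.2 hmt.le)

theorem IsGenGeodesicWithEnds.isGenGeodesic {c : ℝ → Z} {a b : EReal}
    (h : IsGenGeodesicWithEnds c a b) (hc : Continuous c) (hab : a ≤ b) : IsGenGeodesic c := by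
  obtain ⟨hiso, hbelow, habove⟩ := h
  by_cases ha : a = ⊤
  · rw [show c = fun _ => c 0 from funext fun t => hbelow t (by simp [ha]) 0 (by simp [ha])]
    exact isGenGeodesic_const _
  by_cases hb : b = ⊥
  · rw [show c = fun _ => c 0 from funext fun t => habove t (by simp [hb]) 0 (by simp [hb])]
    exact isGenGeodesic_const _
  refine isGenGeodesic_iff.2 ⟨hc, a, b, hab, ha, hb, ?_, fun t ht => ?_⟩
  · rcases hab.eq_or_lt with rfl | hlt
    · intro s hs t ht
      obtain rfl : s = t := EReal.coe_injective (le_antisymm (hs.2.trans ht.1) (ht.2.trans hs.1))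
      simp
    · set S : Set ℝ := (↑) ⁻¹' Ioo a b
      have hEq : EqOn (fun p : ℝ × ℝ => dist (c p.1) (c p.2)) (fun p => |p.1 - p.2|) (S ×ˢ S) :=
        fun p hp => hiso _ hp.1 _ hp.2
      have hsub := preimage_Icc_subset_closure_preimage_Ioo hlt
      exact fun s hs t ht => hEq.closure_prod_self (by fun_prop) (by fun_prop)
        (mk_mem_prod (hsub hs) (hsub ht))
  · rcases not_and_or.1 ht with hta | htb
    · have hnhds : (↑) ⁻¹' Iio a ∈ 𝓝 t :=
        (isOpen_Iio.preimage continuous_coe_real_ereal).mem_nhds (not_le.1 hta)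
      exact eventually_of_mem hnhds fun s hs => hbelow s hs t (not_le.1 hta)
    · have hnhds : (↑) ⁻¹' Ioi b ∈ 𝓝 t :=
        (isOpen_Ioi.preimage continuous_coe_real_ereal).mem_nhds (not_le.1 htb)
      exact eventually_of_mem hnhds fun s hs => habove s hs t (not_le.1 htb)

theorem IsGenGeodesicWithEnds.of_tendsto {u : ℕ → ℝ → Z} {c : ℝ → Z} {a b : ℕ → EReal}
    {a₀ b₀ : EReal} (hu : ∀ n, IsGenGeodesicWithEnds (u n) (a n) (b n))
    (ha : Tendsto a atTop (𝓝 a₀)) (hb : Tendsto b atTop (𝓝 b₀))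
    (hc : ∀ t, Tendsto (fun n => u n t) atTop (𝓝 (c t))) : IsGenGeodesicWithEnds c a₀ b₀ := by
  have hIoo : ∀ s ∈ ((↑) : ℝ → EReal) ⁻¹' Ioo a₀ b₀,
      ∀ᶠ n in atTop, s ∈ ((↑) : ℝ → EReal) ⁻¹' Ioo (a n) (b n) := fun s hs =>
    (ha.eventually_lt_const hs.1).and (hb.eventually_const_lt hs.2)
  refine ⟨fun s hs t ht => ?_, fun s hs t ht => ?_, fun s hs t ht => ?_⟩
  · refine tendsto_nhds_unique_of_eventuallyEq ((hc s).dist (hc t)) tendsto_const_nhds ?_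
    filter_upwards [hIoo s hs, hIoo t ht] with n hsn htn using (hu n).1 s hsn t htn
  · refine tendsto_nhds_unique_of_eventuallyEq (hc s) (hc t) ?_
    filter_upwards [ha.eventually_const_lt hs, ha.eventually_const_lt ht] with n hsn htn
      using (hu n).2.1 s hsn t htn
  · refine tendsto_nhds_unique_of_eventuallyEq (hc s) (hc t) ?_
    filter_upwards [hb.eventually_lt_const hs, hb.eventually_lt_const ht] with n hsn htn
      using (hu n).2.2 s hsn t htn

theorem isGenGeodesic_of_tendsto {u : ℕ → ℝ → Z} {c : ℝ → Z} (hu : ∀ n, IsGenGeodesic (u n))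
    (hc : ∀ t, Tendsto (fun n => u n t) atTop (𝓝 (c t))) : IsGenGeodesic c := by
  choose a b hab hends using fun n => (hu n).exists_withEnds
  obtain ⟨⟨a₀, b₀⟩, ψ, hψ, hlim⟩ := SeqCompactSpace.tendsto_subseq fun n => (a n, b n)
  have ha : Tendsto (a ∘ ψ) atTop (𝓝 a₀) := (continuous_fst.tendsto _).comp hlim
  have hb : Tendsto (b ∘ ψ) atTop (𝓝 b₀) := (continuous_snd.tendsto _).comp hlim
  have hlip : LipschitzWith 1 c := (isClosed_setOfPred_lipschitzWith 1).mem_of_tendsto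
    (tendsto_pi_nhds.2 hc) (Eventually.of_forall fun n => (hu n).lipschitzWith)
  exact (IsGenGeodesicWithEnds.of_tendsto (fun n => hends (ψ n)) ha hb
    fun t => (hc t).comp hψ.tendsto_atTop).isGenGeodesic hlip.continuous
    (le_of_tendsto_of_tendsto' ha hb fun n => hab (ψ n))

theorem exists_subseq_tendsto_of_lipschitzWith [ProperSpace Z] {K : NNReal} {u : ℕ → ℝ → Z}
    (hu : ∀ n, LipschitzWith K (u n)) {x₀ : ℝ} {z₀ : Z} {R : ℝ}
    (hR : ∀ n, dist (u n x₀) z₀ ≤ R) :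
    ∃ c : ℝ → Z, ∃ φ : ℕ → ℕ, StrictMono φ ∧
      ∀ t, Tendsto (fun n => u (φ n) t) atTop (𝓝 (c t)) := by
  have hmem : ∀ n, (fun q : ℚ => u n q) ∈
      univ.pi fun q : ℚ => Metric.closedBall z₀ (K * |(q : ℝ) - x₀| + R) := fun n q _ =>
    calc dist (u n q) z₀ ≤ dist (u n q) (u n x₀) + dist (u n x₀) z₀ := dist_triangle _ _ _
      _ ≤ K * |(q : ℝ) - x₀| + R := add_le_add ((hu n).dist_le_mul _ _) (hR n)
  obtain ⟨g, -, φ, hφ, hg⟩ :=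
    (isCompact_univ_pi fun q => isCompact_closedBall _ _).isSeqCompact hmem
  have hcauchy : ∀ t, CauchySeq fun n => u (φ n) t := by
    refine fun t => Metric.cauchySeq_iff.2 fun ε hε => ?_
    obtain ⟨δ, hδ, hKδ⟩ := exists_pos_mul_lt (div_pos hε three_pos) K
    obtain ⟨q, hq⟩ := exists_rat_near t hδ
    have hclose : ∀ n, dist (u n t) (u n q) < ε / 3 := fun n =>
      calc dist (u n t) (u n q) ≤ K * |t - q| := (hu n).dist_le_mul _ _
        _ ≤ K * δ := by gcongr
        _ < ε / 3 := hKδ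
    obtain ⟨N, hN⟩ := Metric.cauchySeq_iff.1 (tendsto_pi_nhds.1 hg q).cauchySeq (ε / 3)
      (div_pos hε three_pos)
    refine ⟨N, fun m hm n hn => ?_⟩
    calc dist (u (φ m) t) (u (φ n) t)
        ≤ dist (u (φ m) t) (u (φ m) q) + dist (u (φ m) q) (u (φ n) q)
          + dist (u (φ n) q) (u (φ n) t) := dist_triangle4 _ _ _ _
      _ < ε / 3 + ε / 3 + ε / 3 := by
        gcongr
        · exact hclose _
        · exact hN m hm n hn
        · rw [dist_comm]; exact hclose _
      _ = ε := by ring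
  choose c hc using fun t => cauchySeq_tendsto_of_complete (hcauchy t)
  exact ⟨c, φ, hφ, hc⟩

theorem integrable_comp_abs_of_integrableOn_Ioi {E : Type*} [NormedAddCommGroup E] {f : ℝ → E}
    (hf : IntegrableOn f (Ioi 0)) : Integrable fun x => f |x| := by
  have hIoi : IntegrableOn (fun x => f |x|) (Ioi 0) :=
    hf.congr_fun (fun x hx => by rw [abs_of_pos (mem_Ioi.1 hx)]) measurableSet_Ioi
  have hIic : IntegrableOn (fun x => f |x|) (Iic 0) := by
    have hneg : MeasurableEmbedding fun x : ℝ => -x := (Homeomorph.neg ℝ).measurableEmbedding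
    rw [← Measure.map_neg_eq_self (volume : Measure ℝ), hneg.integrableOn_map_iff]
    simp_rw [Function.comp_def, abs_neg, neg_preimage, neg_Iic, neg_zero]
    exact Iff.mpr integrableOn_Ici_iff_integrableOn_Ioi hIoi
  have h := hIic.union hIoi
  rwa [Iic_union_Ioi, integrableOn_univ] at h

theorem integrable_add_mul_abs_div_two_exp_abs (A B : ℝ) :
    Integrable fun s : ℝ => (A + B * |s|) / (2 * Real.exp |s|) := by
  have hmom : IntegrableOn (fun x : ℝ => Real.exp (-x) * x) (Ioi 0) := by
    have h := Real.GammaIntegral_convergent two_pos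
    rwa [show (2 : ℝ) - 1 = 1 by norm_num, funext fun x : ℝ => congrArg _ (Real.rpow_one x)] at h
  have hf : IntegrableOn (fun x : ℝ => A / 2 * Real.exp (-x) + B / 2 * (Real.exp (-x) * x))
      (Ioi 0) := ((integrableOn_exp_neg_Ioi 0).const_mul _).add (hmom.const_mul _)
  refine integrable_comp_abs_of_integrableOn_Ioi (f := fun x => (A + B * x) / (2 * Real.exp x))
    (hf.congr_fun (fun x _ => ?_) measurableSet_Ioi)
  simp only [Real.exp_neg]
  field_simp

theorem dist_apply_le_of_lipschitzWith {c c' : ℝ → Z} (hc : LipschitzWith 1 c)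
    (hc' : LipschitzWith 1 c') (s x : ℝ) :
    dist (c s) (c' s) ≤ dist (c x) (c' x) + 2 * |s - x| := by
  have h := hc.dist_le_mul s x
  have h' := hc'.dist_le_mul x s
  simp only [NNReal.coe_one, one_mul, Real.dist_eq, abs_sub_comm x s] at h h'
  linarith [dist_triangle4 (c s) (c x) (c' x) (c' s)]

theorem dist_div_two_exp_abs_le {c c' : ℝ → Z} (hc : LipschitzWith 1 c)
    (hc' : LipschitzWith 1 c') {M : ℝ} (hM : dist (c 0) (c' 0) ≤ M) (s : ℝ) :
    dist (c s) (c' s) / (2 * Real.exp |s|) ≤ (M + 2 * |s|) / (2 * Real.exp |s|) := by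
  have h := dist_apply_le_of_lipschitzWith hc hc' s 0
  rw [sub_zero] at h
  gcongr
  linarith

theorem continuous_dist_div_two_exp_abs {c c' : ℝ → Z} (hc : Continuous c)
    (hc' : Continuous c') : Continuous fun s => dist (c s) (c' s) / (2 * Real.exp |s|) := by
  fun_prop (disch := intro; positivity)

theorem integrable_dist_div_two_exp_abs {c c' : ℝ → Z} (hc : LipschitzWith 1 c)
    (hc' : LipschitzWith 1 c') : Integrable fun s => dist (c s) (c' s) / (2 * Real.exp |s|) :=
  (integrable_add_mul_abs_div_two_exp_abs _ 2).mono'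
    (continuous_dist_div_two_exp_abs hc.continuous hc'.continuous).aestronglyMeasurable
    (ae_of_all _ fun s => by
      rw [Real.norm_of_nonneg (by positivity)]
      exact dist_div_two_exp_abs_le hc hc' le_rfl s)

theorem dFS_comm (c c' : ℝ → Z) : dFS c c' = dFS c' c := by
  simp only [dFS, dist_comm]

theorem dFS_triangle {c₁ c₂ c₃ : ℝ → Z} (h₁ : LipschitzWith 1 c₁) (h₂ : LipschitzWith 1 c₂)
    (h₃ : LipschitzWith 1 c₃) : dFS c₁ c₃ ≤ dFS c₁ c₂ + dFS c₂ c₃ := by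
  have h₁₂ := integrable_dist_div_two_exp_abs h₁ h₂
  have h₂₃ := integrable_dist_div_two_exp_abs h₂ h₃
  rw [dFS, dFS, dFS, ← integral_add h₁₂ h₂₃]
  refine integral_mono (integrable_dist_div_two_exp_abs h₁ h₃) (h₁₂.add h₂₃) fun s => ?_
  rw [← add_div]
  gcongr
  exact dist_triangle _ _ _

theorem le_dFS_of_le_dist {c c' : ℝ → Z} (hc : LipschitzWith 1 c) (hc' : LipschitzWith 1 c')
    {t ε : ℝ} (hε : 0 ≤ ε) (hd : ε ≤ dist (c t) (c' t)) :
    min (ε / 4) 1 * ε / (2 * Real.exp (|t| + 1)) ≤ dFS c c' := by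
  set r := min (ε / 4) 1
  have hr : 0 ≤ r := le_min (by positivity) zero_le_one
  set m := ε / 2 / (2 * Real.exp (|t| + 1))
  have hbelow : ∀ s ∈ Icc (t - r) (t + r), m ≤ dist (c s) (c' s) / (2 * Real.exp |s|) := by
    intro s hs
    have hst : |s - t| ≤ r := abs_sub_le_iff.2 ⟨by linarith [hs.2], by linarith [hs.1]⟩
    have hdist : ε / 2 ≤ dist (c s) (c' s) := by
      linarith [dist_apply_le_of_lipschitzWith hc hc' t s, abs_sub_comm t s, min_le_left (ε / 4) 1]
    have habs : |s| ≤ |t| + 1 := by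
      linarith [abs_sub_abs_le_abs_sub s t, min_le_right (ε / 4) 1]
    exact div_le_div₀ dist_nonneg hdist (by positivity) (by gcongr)
  have hint := integrable_dist_div_two_exp_abs hc hc'
  calc min (ε / 4) 1 * ε / (2 * Real.exp (|t| + 1))
      = m * (volume (Icc (t - r) (t + r))).toReal := by
        rw [Real.volume_Icc, ENNReal.toReal_ofReal (by linarith)]
        ring
    _ ≤ ∫ s in Icc (t - r) (t + r), dist (c s) (c' s) / (2 * Real.exp |s|) :=
        setIntegral_ge_of_const_le_real measurableSet_Icc
          (by rw [Real.volume_Icc]; exact ENNReal.ofReal_ne_top) hbelow hint.integrableOn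
    _ ≤ dFS c c' := setIntegral_le_integral hint (ae_of_all _ fun s => by positivity)

theorem dist_apply_le_four_add_mul_dFS {c c' : ℝ → Z} (hc : LipschitzWith 1 c)
    (hc' : LipschitzWith 1 c') (t : ℝ) : dist (c t) (c' t) ≤ 4 + 2 * Real.exp (|t| + 1) * dFS c c' := by
  by_cases hd : dist (c t) (c' t) ≤ 4
  · have : 0 ≤ dFS c c' := integral_nonneg fun s => by positivity
    have : 0 ≤ 2 * Real.exp (|t| + 1) * dFS c c' := by positivity
    linarith
  have h := le_dFS_of_le_dist hc hc' dist_nonneg le_rfl (t := t)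
  rw [min_eq_right (by linarith), one_mul, div_le_iff₀ (by positivity)] at h
  linarith

theorem tendsto_dFS_of_tendsto {u : ℕ → ℝ → Z} {c : ℝ → Z} (hu : ∀ n, LipschitzWith 1 (u n))
    (hc : LipschitzWith 1 c) {M : ℝ} (hM : ∀ n, dist (u n 0) (c 0) ≤ M)
    (hlim : ∀ t, Tendsto (fun n => u n t) atTop (𝓝 (c t))) :
    Tendsto (fun n => dFS (u n) c) atTop (𝓝 0) := by
  have hpt : ∀ s, Tendsto (fun n => dist (u n s) (c s) / (2 * Real.exp |s|)) atTop (𝓝 0) :=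
    fun s => by
      simpa using ((hlim s).dist (tendsto_const_nhds (x := c s))).div_const (2 * Real.exp |s|)
  simpa only [dFS, integral_zero] using tendsto_integral_of_dominated_convergence _
    (fun n =>
      (continuous_dist_div_two_exp_abs (hu n).continuous hc.continuous).aestronglyMeasurable)
    (integrable_add_mul_abs_div_two_exp_abs M 2)
    (fun n => ae_of_all _ fun s => by
      rw [Real.norm_of_nonneg (by positivity)]
      exact dist_div_two_exp_abs_le (hu n) hc (hM n) s)
    (ae_of_all _ hpt)

theorem exists_isGenGeodesic_subseq_tendsto [ProperSpace Z] {u : ℕ → ℝ → Z}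
    (hu : ∀ n, IsGenGeodesic (u n)) {z₀ : Z} {R : ℝ} (hR : ∀ n, dist (u n 0) z₀ ≤ R) :
    ∃ c, IsGenGeodesic c ∧ ∃ φ : ℕ → ℕ, StrictMono φ ∧
      (∀ t, Tendsto (fun n => u (φ n) t) atTop (𝓝 (c t))) ∧
      Tendsto (fun n => dFS (u (φ n)) c) atTop (𝓝 0) := by
  obtain ⟨c, φ, hφ, hlim⟩ :=
    exists_subseq_tendsto_of_lipschitzWith (fun n => (hu n).lipschitzWith) hR
  have hc := isGenGeodesic_of_tendsto (fun n => hu (φ n)) hlim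
  have hc₀ : dist (c 0) z₀ ≤ R := le_of_tendsto ((hlim 0).dist tendsto_const_nhds)
    (Eventually.of_forall fun n => hR (φ n))
  refine ⟨c, hc, φ, hφ, hlim, tendsto_dFS_of_tendsto (fun n => (hu (φ n)).lipschitzWith)
    hc.lipschitzWith (M := R + R) (fun n => ?_) hlim⟩
  exact (dist_triangle_right _ _ z₀).trans (add_le_add (hR (φ n)) hc₀)

end FlowSpace

/-- For a proper metric space `Z` the flow space `FS(Z)` is proper (closed `dFS`-balls
are sequentially compact for `dFS`), and each evaluation map `c ↦ c(t)` is uniformly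
continuous and proper. -/
theorem flow_space_proper {Z : Type*} [MetricSpace Z] [ProperSpace Z] :
    (∀ c₀ : ℝ → Z, IsGenGeodesic c₀ → ∀ r : ℝ, ∀ u : ℕ → ℝ → Z,
      (∀ n, IsGenGeodesic (u n)) → (∀ n, dFS (u n) c₀ ≤ r) →
      ∃ c : ℝ → Z, IsGenGeodesic c ∧ dFS c c₀ ≤ r ∧
        ∃ φ : ℕ → ℕ, StrictMono φ ∧
          Filter.Tendsto (fun n => dFS (u (φ n)) c) Filter.atTop (nhds 0)) ∧
    (∀ t : ℝ, ∀ ε > 0, ∃ δ > 0, ∀ c c' : ℝ → Z, IsGenGeodesic c → IsGenGeodesic c' →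
      dFS c c' < δ → dist (c t) (c' t) < ε) ∧
    (∀ t : ℝ, ∀ K : Set Z, IsCompact K → ∀ u : ℕ → ℝ → Z,
      (∀ n, IsGenGeodesic (u n)) → (∀ n, u n t ∈ K) →
      ∃ c : ℝ → Z, IsGenGeodesic c ∧ c t ∈ K ∧
        ∃ φ : ℕ → ℕ, StrictMono φ ∧
          Filter.Tendsto (fun n => dFS (u (φ n)) c) Filter.atTop (nhds 0)) := by
  refine ⟨fun c₀ hc₀ r u hu hr => ?_, fun t ε hε => ?_, fun t K hK u hu huK => ?_⟩
  · have hR : ∀ n, dist (u n 0) (c₀ 0) ≤ 4 + 2 * Real.exp (|0| + 1) * r := fun n =>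
      (dist_apply_le_four_add_mul_dFS (hu n).lipschitzWith hc₀.lipschitzWith 0).trans
        (by gcongr; exact hr n)
    obtain ⟨c, hc, φ, hφ, -, hdFS⟩ := exists_isGenGeodesic_subseq_tendsto hu hR
    have hle : ∀ n, dFS c c₀ ≤ dFS (u (φ n)) c + r := fun n =>
      (dFS_triangle hc.lipschitzWith (hu (φ n)).lipschitzWith hc₀.lipschitzWith).trans
        (by rw [dFS_comm c]; gcongr; exact hr _)
    exact ⟨c, hc, by simpa using ge_of_tendsto (hdFS.add_const r) (Eventually.of_forall hle),
      φ, hφ, hdFS⟩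
  · refine ⟨min (ε / 4) 1 * ε / (2 * Real.exp (|t| + 1)), by positivity,
      fun c c' hc hc' hlt => ?_⟩
    by_contra! hge
    exact hlt.not_ge (le_dFS_of_le_dist hc.lipschitzWith hc'.lipschitzWith hε.le hge)
  · obtain ⟨R, hKR⟩ := hK.isBounded.subset_closedBall (u 0 t)
    have hR : ∀ n, dist (u n 0) (u 0 t) ≤ |t| + R := fun n =>
      (dist_triangle _ (u n t) _).trans (add_le_add
        (by simpa [Real.dist_eq] using (hu n).lipschitzWith.dist_le_mul 0 t) (hKR (huK n)))
    obtain ⟨c, hc, φ, hφ, hlim, hdFS⟩ := exists_isGenGeodesic_subseq_tendsto hu hR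
    exact ⟨c, hc, hK.isClosed.mem_of_tendsto (hlim t) (Eventually.of_forall fun n => huK _),
      φ, hφ, hdFS⟩
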